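/- arXiv:1310.7207 — 2 statements merged into one kernel-verified Lean document; each statement's English description precedes it below -/
import Mathlib

section
/- Let S be a t-semiarc in PG(2,q) with t = q - 1 and q ≥ 2. Then S consists of exactly three non-collinear points. -/
open Configuration Projectivization
open scoped LinearAlgebra.Projectivization

/-- The points of `PG(2,F)`. Via the `Configuration.ofField` instance, the same type
also serves as the type of lines, with `p ∈ l` meaning that the point `p` lies on
the line `l` (vanishing of the dot product of homogeneous coordinates). -/
abbrev PG (F : Type*) [Field F] := ℙ F (Fin 3 → F)

/-- A `t`-semiarc in `PG(2,F)`: a nonempty pointset such that through each of its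
points there pass exactly `t` tangent lines. -/
def IsSemiarcPG {F : Type*} [Field F] (t : ℕ) (S : Set (PG F)) : Prop :=
  S.Nonempty ∧ ∀ p ∈ S, Nat.card {l : PG F | {x : PG F | x ∈ l} ∩ S = {p}} = t

lemma vec_ne_zero {F : Type*} [Field F] (v : Fin 3 → F) (i : Fin 3) (h : v i ≠ 0) :
    v ≠ 0 := fun hv => h (by simp [hv])

section Aux

variable {F : Type*} [Field F] [Fintype F] [DecidableEq F]

instance instFinitePG : Finite (PG F) := Quotient.finite _

omit [DecidableEq F] in
lemma fiber_card_aux (p : PG F) :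
    Nat.card {v : {v : Fin 3 → F // v ≠ 0} // Projectivization.mk' F v = p} =
      Fintype.card F - 1 := by
  have hu : Nat.card Fˣ = Fintype.card F - 1 := by
    rw [Nat.card_units, Nat.card_eq_fintype_card]
  rw [← hu]
  refine Nat.card_congr (Equiv.ofBijective
    (fun a : Fˣ => ⟨⟨(a : F) • p.rep, smul_ne_zero a.ne_zero p.rep_nonzero⟩, by
      rw [mk'_eq_mk]
      refine Eq.trans ?_ p.mk_rep
      rw [mk_eq_mk_iff]
      exact ⟨a, by rw [Units.smul_def]⟩⟩) ⟨?_, ?_⟩).symm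
  · intro a b hab
    have h2 : (a : F) • p.rep = (b : F) • p.rep :=
      congrArg (fun x => (x.1 : Fin 3 → F)) hab
    exact Units.ext (smul_left_injective F p.rep_nonzero h2)
  · rintro ⟨⟨v, hv⟩, hmk⟩
    rw [mk'_eq_mk] at hmk
    have h2 : Projectivization.mk F v hv = Projectivization.mk F p.rep p.rep_nonzero :=
      hmk.trans p.mk_rep.symm
    obtain ⟨a, ha⟩ := (mk_eq_mk_iff F v p.rep hv p.rep_nonzero).mp h2
    refine ⟨a, Subtype.ext (Subtype.ext ?_)⟩
    show (a : F) • p.rep = v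
    rw [← Units.smul_def]
    exact ha

lemma card_PG (q : ℕ) (hq : Fintype.card F = q) (hq2 : 2 ≤ q) :
    Nat.card (PG F) = q ^ 2 + q + 1 := by
  classical
  letI : Fintype (PG F) := Fintype.ofFinite _
  have key : Nat.card {v : Fin 3 → F // v ≠ 0} = Nat.card (PG F) * (q - 1) := by
    rw [Nat.card_congr (Equiv.sigmaFiberEquiv (Projectivization.mk' F)).symm]
    letI : ∀ p : PG F, Fintype {v : {v : Fin 3 → F // v ≠ 0} // Projectivization.mk' F v = p} :=
      fun _ => Fintype.ofFinite _
    rw [Nat.card_eq_fintype_card, Fintype.card_sigma]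
    have hfib : ∀ p : PG F,
        Fintype.card {v : {v : Fin 3 → F // v ≠ 0} // Projectivization.mk' F v = p} = q - 1 :=
      fun p => by rw [← Nat.card_eq_fintype_card, fiber_card_aux, hq]
    simp_rw [hfib]
    rw [Finset.sum_const, Finset.card_univ, smul_eq_mul, Nat.card_eq_fintype_card]
  have lhs : Nat.card {v : Fin 3 → F // v ≠ 0} = q ^ 3 - 1 := by
    simp only [ne_eq]
    rw [Nat.card_eq_fintype_card, Fintype.card_subtype_compl, Fintype.card_subtype_eq,
      Fintype.card_fun, hq, Fintype.card_fin]
  obtain ⟨k, rfl⟩ : ∃ k, q = k + 2 := ⟨q - 2, by omega⟩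
  have h3 : (k + 2) ^ 3 - 1 = (k ^ 2 + 5 * k + 7) * (k + 1) :=
    Nat.sub_eq_of_eq_add (by ring)
  have h4 : Nat.card (PG F) * (k + 1) = (k ^ 2 + 5 * k + 7) * (k + 1) := by
    have hsub : (k + 2) - 1 = k + 1 := by omega
    rw [← h3, ← lhs, key, hsub]
  have h5 := Nat.eq_of_mul_eq_mul_right (Nat.succ_pos k) h4
  rw [h5]; ring

lemma order_PG (q : ℕ) (hq : Fintype.card F = q) (hq2 : 2 ≤ q) :
    Configuration.ProjectivePlane.order (PG F) (PG F) = q := by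
  classical
  letI : Fintype (PG F) := Fintype.ofFinite _
  have h := Configuration.ProjectivePlane.card_points (PG F) (PG F)
  rw [← Nat.card_eq_fintype_card, card_PG q hq hq2] at h
  set n := Configuration.ProjectivePlane.order (PG F) (PG F) with hn
  rcases lt_trichotomy n q with hl | he | hg
  · nlinarith
  · exact he
  · nlinarith

lemma lines_through (q : ℕ) (hq : Fintype.card F = q) (hq2 : 2 ≤ q) (p : PG F) :
    ({l : PG F | p ∈ l}).ncard = q + 1 := by
  have h := Configuration.ProjectivePlane.lineCount_eq (PG F) p
  rw [order_PG q hq hq2] at h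
  exact h

end Aux

theorem semiarc_t_eq_q_sub_one
    {F : Type*} [Field F] [Fintype F] [DecidableEq F]
    (q : ℕ) (hq : Fintype.card F = q) (hq2 : 2 ≤ q)
    (S : Set (PG F)) (hS : IsSemiarcPG (q - 1) S) :
    ∃ a b c : PG F, a ≠ b ∧ a ≠ c ∧ b ≠ c ∧ S = {a, b, c} ∧
      ¬ ∃ l : PG F, a ∈ l ∧ b ∈ l ∧ c ∈ l := by
  classical
  obtain ⟨⟨p, hp⟩, htan⟩ := hS
  have huniq : ∀ {a b l l' : PG F}, a ∈ l → b ∈ l → a ∈ l' → b ∈ l' → a ≠ b → l = l' :=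
    fun ha hb ha' hb' hab =>
      (Configuration.Nondegenerate.eq_or_eq ha hb ha' hb').resolve_left hab
  have hexline : ∀ a b : PG F, a ≠ b → ∃ l : PG F, a ∈ l ∧ b ∈ l := fun a b hab =>
    (Configuration.HasLines.existsUnique_line (PG F) (PG F) a b hab).exists
  set Sec : PG F → Set (PG F) :=
    fun p => {l | p ∈ l ∧ {x : PG F | x ∈ l} ∩ S ≠ {p}} with hSecDef
  have hsec2 : ∀ p ∈ S, (Sec p).ncard = 2 := by
    intro p hp
    have hunion : {l : PG F | p ∈ l} =
        {l : PG F | {x : PG F | x ∈ l} ∩ S = {p}} ∪ Sec p := by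
      ext l
      simp only [Set.mem_setOf_eq, Set.mem_union, hSecDef]
      constructor
      · intro h
        by_cases hc : {x : PG F | x ∈ l} ∩ S = {p}
        · exact Or.inl hc
        · exact Or.inr ⟨h, hc⟩
      · rintro (h | h)
        · have hpmem : p ∈ {x : PG F | x ∈ l} ∩ S := by
            rw [h]; exact Set.mem_singleton p
          exact hpmem.1
        · exact h.1
    have hd : Disjoint {l : PG F | {x : PG F | x ∈ l} ∩ S = {p}} (Sec p) := by
      rw [Set.disjoint_left]
      intro l hl hl'
      exact hl'.2 hl
    have hq1 := lines_through q hq hq2 p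
    rw [hunion, Set.ncard_union_eq hd (Set.toFinite _) (Set.toFinite _)] at hq1
    have hTp : ({l : PG F | {x : PG F | x ∈ l} ∩ S = {p}}).ncard = q - 1 := by
      rw [← Nat.card_coe_set_eq]
      exact htan p hp
    omega
  have hsecne : ∀ p ∈ S, ∀ l ∈ Sec p, ∃ x ∈ S, x ≠ p ∧ x ∈ l := by
    intro p hp l hl
    by_contra h
    push_neg at h
    apply hl.2
    ext x
    simp only [Set.mem_inter_iff, Set.mem_setOf_eq, Set.mem_singleton_iff]
    constructor
    · rintro ⟨hxl, hxS⟩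
      by_contra hxp
      exact h x hxS hxp hxl
    · rintro rfl
      exact ⟨hl.1, hp⟩
  have hline : ∀ p ∈ S, ∀ x ∈ S, x ≠ p → ∀ l : PG F, p ∈ l → x ∈ l → l ∈ Sec p := by
    intro p hp x hx hxp l hpl hxl
    refine ⟨hpl, fun hc => ?_⟩
    have hxmem : x ∈ {y : PG F | y ∈ l} ∩ S := ⟨hxl, hx⟩
    rw [hc, Set.mem_singleton_iff] at hxmem
    exact hxp hxmem
  -- no line contains three points of S, as witnessed by an external point of S
  have hthree : ∀ l0 : PG F, ∀ r ∈ S, r ∉ l0 →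
      ∀ x ∈ S, x ∈ l0 → ∀ y ∈ S, y ∈ l0 → x ≠ y →
      ∀ z ∈ S, z ∈ l0 → z ≠ x → z ≠ y → False := by
    intro l0 r hrS hrl0 x hxS hxl0 y hyS hyl0 hxy z hzS hzl0 hzx hzy
    have hrx : x ≠ r := fun h => hrl0 (h ▸ hxl0)
    have hry : y ≠ r := fun h => hrl0 (h ▸ hyl0)
    have hrz : z ≠ r := fun h => hrl0 (h ▸ hzl0)
    obtain ⟨m1, hrm1, hxm1⟩ := hexline r x (Ne.symm hrx)
    obtain ⟨m2, hrm2, hym2⟩ := hexline r y (Ne.symm hry)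
    obtain ⟨m3, hrm3, hzm3⟩ := hexline r z (Ne.symm hrz)
    have hm1 : m1 ∈ Sec r := hline r hrS x hxS hrx m1 hrm1 hxm1
    have hm2 : m2 ∈ Sec r := hline r hrS y hyS hry m2 hrm2 hym2
    have hm3 : m3 ∈ Sec r := hline r hrS z hzS hrz m3 hrm3 hzm3
    have hne12 : m1 ≠ m2 := by
      intro h
      have hl : m1 = l0 := huniq hxm1 (h ▸ hym2) hxl0 hyl0 hxy
      exact hrl0 (hl ▸ hrm1)
    have hne13 : m1 ≠ m3 := by
      intro h
      have hl : m1 = l0 := huniq hxm1 (h ▸ hzm3) hxl0 hzl0 (Ne.symm hzx)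
      exact hrl0 (hl ▸ hrm1)
    have hne23 : m2 ≠ m3 := by
      intro h
      have hl : m2 = l0 := huniq hym2 (h ▸ hzm3) hyl0 hzl0 (Ne.symm hzy)
      exact hrl0 (hl ▸ hrm2)
    have h3 : ({m1, m2, m3} : Set (PG F)).ncard = 3 :=
      Set.ncard_eq_three.mpr ⟨m1, m2, m3, hne12, hne13, hne23, rfl⟩
    have hsub : ({m1, m2, m3} : Set (PG F)) ⊆ Sec r := by
      intro l hl
      rcases hl with rfl | rfl | hl
      · exact hm1
      · exact hm2
      · rw [Set.mem_singleton_iff] at hl; subst hl; exact hm3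
    have hle := Set.ncard_le_ncard hsub (Set.toFinite _)
    rw [h3, hsec2 r hrS] at hle
    omega
  obtain ⟨l1, l2, hl12, hSecp⟩ := Set.ncard_eq_two.mp (hsec2 p hp)
  have hl1 : l1 ∈ Sec p := by rw [hSecp]; exact Set.mem_insert _ _
  have hl2 : l2 ∈ Sec p := by rw [hSecp]; exact Set.mem_insert_of_mem _ rfl
  obtain ⟨b, hbS, hbp, hbl1⟩ := hsecne p hp l1 hl1
  obtain ⟨c, hcS, hcp, hcl2⟩ := hsecne p hp l2 hl2
  have hpl1 : p ∈ l1 := hl1.1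
  have hpl2 : p ∈ l2 := hl2.1
  have hcl1 : c ∉ l1 := fun h => hl12 (huniq h hpl1 hcl2 hpl2 hcp)
  have hbl2 : b ∉ l2 := fun h => hl12 (huniq hbl1 hpl1 h hpl2 hbp)
  have hbc : b ≠ c := fun h => hcl1 (h ▸ hbl1)
  have hcover : ∀ x ∈ S, x ∈ l1 ∨ x ∈ l2 := by
    intro x hx
    by_cases hxp : x = p
    · subst hxp; exact Or.inl hpl1
    · obtain ⟨l, hpl, hxl⟩ := hexline p x (Ne.symm hxp)
      have hlSec : l ∈ Sec p := hline p hp x hx hxp l hpl hxl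
      rw [hSecp] at hlSec
      rcases hlSec with rfl | hlSec
      · exact Or.inl hxl
      · rw [Set.mem_singleton_iff] at hlSec
        subst hlSec
        exact Or.inr hxl
  have hkey1 : ∀ x ∈ S, x ∈ l1 → x = p ∨ x = b := by
    intro x hxS hxl1
    by_contra h
    push_neg at h
    exact hthree l1 c hcS hcl1 p hp hpl1 b hbS hbl1 (Ne.symm hbp) x hxS hxl1 h.1 h.2
  have hkey2 : ∀ x ∈ S, x ∈ l2 → x = p ∨ x = c := by
    intro x hxS hxl2
    by_contra h
    push_neg at h
    exact hthree l2 b hbS hbl2 p hp hpl2 c hcS hcl2 (Ne.symm hcp) x hxS hxl2 h.1 h.2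
  have hSeq : S = {p, b, c} := by
    ext x
    simp only [Set.mem_insert_iff, Set.mem_singleton_iff]
    constructor
    · intro hx
      rcases hcover x hx with h | h
      · rcases hkey1 x hx h with rfl | rfl
        · exact Or.inl rfl
        · exact Or.inr (Or.inl rfl)
      · rcases hkey2 x hx h with rfl | rfl
        · exact Or.inl rfl
        · exact Or.inr (Or.inr rfl)
    · rintro (rfl | rfl | rfl)
      · exact hp
      · exact hbS
      · exact hcS
  refine ⟨p, b, c, Ne.symm hbp, Ne.symm hcp, hbc, hSeq, ?_⟩
  rintro ⟨l, hpl, hbl, hcl⟩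
  have hl : l = l1 := huniq hpl hbl hpl1 hbl1 (Ne.symm hbp)
  exact hcl1 (hl ▸ hcl)
end

section
/- Let S be a set of k + q - t + ε points in PG(2,q) with a k-secant ℓ (2 ≤ k ≤ q, 1 ≤ t ≤ q - 3), such that through each point of ℓ ∩ S there pass exactly t tangents to S, with t ≥ 2 and k > q - q/t + 1. Suppose ℓ' is a tangent line to S at a point T ∈ ℓ ∩ S, and suppose that for a fixed point Q ∈ ℓ \ S every point of ℓ' \ {T} lies on at most t lines that are either tangents to S at points of (ℓ ∩ S) \ {Q} or skew to S through points of A(t+1) \ {Q}. Then tq ≥ (k-1)t + q, a contradiction; hence ℓ' contains a point lying on more than t such lines. -/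
open Configuration Projectivization
open scoped LinearAlgebra.Projectivization

instance pgFinite {F : Type*} [Field F] [Fintype F] : Finite (PG F) := Quotient.finite _

lemma pg_mem_mk_iff {F : Type*} [Field F] {v w : Fin 3 → F} (hv : v ≠ 0) (hw : w ≠ 0) :
    (Projectivization.mk F v hv) ∈ (Projectivization.mk F w hw) ↔ dotProduct v w = 0 :=
  Iff.rfl

lemma card_points_on_line {F : Type*} [Field F] [Fintype F] [DecidableEq F] (l : PG F) :
    Nat.card {x : PG F // x ∈ l} = Fintype.card F + 1 := by
  have h100 : (![1,0,0] : Fin 3 → F) ≠ 0 := vec_ne_zero _ 0 (by norm_num)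
  have h001 : (![0,0,1] : Fin 3 → F) ≠ 0 := vec_ne_zero _ 2 (by simp)
  set l₀ : PG F := Projectivization.mk F ![0,0,1] h001 with hl₀
  have hmem : ∀ (v : Fin 3 → F) (hv : v ≠ 0), (Projectivization.mk F v hv ∈ l₀ ↔ v 2 = 0) := by
    intro v hv
    rw [hl₀, pg_mem_mk_iff]
    simp [dotProduct, Fin.sum_univ_three]
  have key : Nat.card {x : PG F // x ∈ l₀} = Fintype.card F + 1 := by
    let f : Option F → {x : PG F // x ∈ l₀} := fun o =>
      match o with
      | none => ⟨Projectivization.mk F ![1,0,0] h100, (hmem _ _).2 (by simp)⟩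
      | some a => ⟨Projectivization.mk F ![a,1,0] (vec_ne_zero _ 1 (by norm_num)),
          (hmem _ _).2 (by simp)⟩
    have hinj : Function.Injective f := by
      rintro (_|a) (_|b) h
      · rfl
      · exfalso
        rw [Subtype.mk.injEq, Projectivization.mk_eq_mk_iff] at h
        obtain ⟨u, hu⟩ := h
        have := congrFun hu 1
        simp [Units.smul_def] at this
      · exfalso
        rw [Subtype.mk.injEq, Projectivization.mk_eq_mk_iff] at h
        obtain ⟨u, hu⟩ := h
        have := congrFun hu 1
        simp [Units.smul_def] at this
      · rw [Subtype.mk.injEq, Projectivization.mk_eq_mk_iff] at h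
        obtain ⟨u, hu⟩ := h
        have h1 := congrFun hu 1
        have h0 := congrFun hu 0
        simp [Units.smul_def] at h1 h0
        subst h1
        simp at h0
        rw [h0]
    have hsurj' : ∀ (x : PG F), x ∈ l₀ → ∃ o : Option F, (f o).1 = x := by
      refine Projectivization.ind ?_
      intro v hv hx
      rw [hmem v hv] at hx
      by_cases h1 : v 1 = 0
      · have h0 : v 0 ≠ 0 := by
          intro h0
          apply hv
          funext i
          fin_cases i <;> simp [h0, h1, hx]
        refine ⟨none, ?_⟩
        show Projectivization.mk F ![1,0,0] h100 = Projectivization.mk F v hv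
        rw [Projectivization.mk_eq_mk_iff]
        refine ⟨Units.mk0 (v 0)⁻¹ (inv_ne_zero h0), ?_⟩
        funext i
        fin_cases i <;> simp [h1, hx, inv_mul_cancel₀ h0]
      · refine ⟨some (v 0 / v 1), ?_⟩
        show Projectivization.mk F ![v 0 / v 1,1,0] _ = Projectivization.mk F v hv
        rw [Projectivization.mk_eq_mk_iff]
        refine ⟨Units.mk0 (v 1)⁻¹ (inv_ne_zero h1), ?_⟩
        funext i
        fin_cases i <;> simp [hx, inv_mul_cancel₀ h1, div_eq_inv_mul]
    have hbij : Function.Bijective f :=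
      ⟨hinj, by rintro ⟨x, hx⟩; obtain ⟨o, ho⟩ := hsurj' x hx; exact ⟨o, Subtype.ext ho⟩⟩
    rw [Nat.card_congr (Equiv.ofBijective f hbij).symm, Nat.card_eq_fintype_card,
      Fintype.card_option]
  have hpc := Configuration.ProjectivePlane.pointCount_eq_pointCount (PG F) l l₀
  have : Configuration.pointCount (PG F) l₀ = Fintype.card F + 1 := key
  exact (hpc.trans this)

theorem tangent_line_contains_large_index_point
    {F : Type*} [Field F] [Fintype F] [DecidableEq F]
    (q k t ε : ℕ) (hq : Fintype.card F = q)
    (hk2 : 2 ≤ k) (hkq : k ≤ q) (ht1 : 1 ≤ t) (ht3 : t ≤ q - 3) (ht2 : 2 ≤ t)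
    (hkbig : (q : ℚ) - q / t + 1 < k)
    (S : Set (PG F)) (ℓ : PG F)
    (hsec : ({x : PG F | x ∈ ℓ} ∩ S).ncard = k)
    (hcard : S.ncard = k + q - t + ε)
    (htan : ∀ p ∈ {x : PG F | x ∈ ℓ} ∩ S,
      Nat.card {l : PG F | {x : PG F | x ∈ l} ∩ S = {p}} = t)
    -- `A` is the set of points of `ℓ \ S` through which pass at most `t + 1` skew lines to `S`
    (A : Set (PG F))
    (hA : A = {p : PG F | p ∈ ℓ ∧ p ∉ S ∧
      Nat.card {l : PG F | p ∈ l ∧ {x : PG F | x ∈ l} ∩ S = ∅} ≤ t + 1})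
    (Q : PG F) (hQ : Q ∈ ℓ) (hQS : Q ∉ S)
    (T : PG F) (hT : T ∈ ℓ) (hTS : T ∈ S)
    (ℓ' : PG F) (htang : {x : PG F | x ∈ ℓ'} ∩ S = {T}) :
    -- `ℓ'` contains a point lying on more than `t` lines that are tangents to `S`
    -- at points of `(ℓ ∩ S) \ {Q}` or skew to `S` through points of `A \ {Q}`
    ∃ P : PG F, P ∈ ℓ' ∧ P ≠ T ∧
      t < Nat.card {l : PG F | P ∈ l ∧
        ((∃ p, p ∈ S ∧ p ∈ ℓ ∧ p ≠ Q ∧ {x : PG F | x ∈ l} ∩ S = {p}) ∨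
          ({x : PG F | x ∈ l} ∩ S = ∅ ∧ ∃ a ∈ A, a ≠ Q ∧ a ∈ l))} := by
  classical
  by_contra hcon
  push_neg at hcon
  have hTl' : T ∈ ℓ' := by
    have : T ∈ ({x : PG F | x ∈ ℓ'} ∩ S) := by rw [htang]; exact rfl
    exact this.1
  have hTQ : T ≠ Q := fun h => hQS (h ▸ hTS)
  have hline_card : ∀ l : PG F, ({x : PG F | x ∈ l}).ncard = q + 1 := by
    intro l
    have := card_points_on_line l
    rw [hq] at this
    exact (Nat.card_coe_set_eq _).symm.trans this
  set Lset : PG F → Set (PG F) := fun P => {l : PG F | P ∈ l ∧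
        ((∃ p, p ∈ S ∧ p ∈ ℓ ∧ p ≠ Q ∧ {x : PG F | x ∈ l} ∩ S = {p}) ∨
          ({x : PG F | x ∈ l} ∩ S = ∅ ∧ ∃ a ∈ A, a ≠ Q ∧ a ∈ l))} with hLset
  set E : Set (PG F) := {x : PG F | x ∈ ℓ'} \ {T} with hE
  have hEcard : E.ncard = q := by
    rw [hE, Set.ncard_diff_singleton_of_mem (show T ∈ {x : PG F | x ∈ ℓ'} from hTl'),
      hline_card]
    omega
  set EF : Finset (PG F) := (Set.toFinite E).toFinset with hEF
  have hEFcard : EF.card = q := by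
    rw [hEF, ← Set.ncard_eq_toFinset_card, hEcard]
  set LF : PG F → Finset (PG F) := fun P => (Set.toFinite (Lset P)).toFinset with hLF
  have hLFle : ∀ P ∈ EF, (LF P).card ≤ t := by
    intro P hP
    rw [hEF, Set.Finite.mem_toFinset, hE] at hP
    have h := hcon P hP.1 (by simpa using hP.2)
    calc (LF P).card = (Lset P).ncard := (Set.ncard_eq_toFinset_card _ _).symm
      _ = Nat.card (Lset P) := Nat.card_coe_set_eq _
      _ ≤ t := h
  set Sec : Set (PG F) := ({x : PG F | x ∈ ℓ} ∩ S) \ {T} with hSecDef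
  have hSecCard : Sec.ncard = k - 1 := by
    rw [hSecDef, Set.ncard_diff_singleton_of_mem
      (show T ∈ ({x : PG F | x ∈ ℓ} ∩ S) from ⟨hT, hTS⟩), hsec]
  set SecF : Finset (PG F) := (Set.toFinite Sec).toFinset with hSecF
  have hSecFcard : SecF.card = k - 1 := by
    rw [hSecF, ← Set.ncard_eq_toFinset_card, hSecCard]
  set Tan : PG F → Set (PG F) := fun p => {l : PG F | {x : PG F | x ∈ l} ∩ S = {p}} with hTan
  set Tangents : Finset (PG F) := SecF.biUnion (fun p => (Set.toFinite (Tan p)).toFinset)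
    with hTangents
  have hTangentsCard : Tangents.card = (k - 1) * t := by
    rw [hTangents, Finset.card_biUnion]
    · rw [Finset.sum_congr rfl (fun p hp => ?_), Finset.sum_const, smul_eq_mul, hSecFcard]
      rw [hSecF, Set.Finite.mem_toFinset, hSecDef] at hp
      calc (Set.toFinite (Tan p)).toFinset.card = (Tan p).ncard :=
            (Set.ncard_eq_toFinset_card _ _).symm
        _ = Nat.card (Tan p) := Nat.card_coe_set_eq _
        _ = t := htan p hp.1
    · intro p hp p' hp' hne
      simp only [Finset.disjoint_left, Set.Finite.mem_toFinset]
      intro l hl hl'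
      rw [hTan] at hl hl'
      exact hne (Set.singleton_eq_singleton_iff.1 ((hl.symm).trans hl'))
  have htl : ∀ l ∈ Tangents, ∃ p, p ∈ S ∧ p ∈ ℓ ∧ p ≠ T ∧ {x : PG F | x ∈ l} ∩ S = {p} := by
    intro l hl
    rw [hTangents, Finset.mem_biUnion] at hl
    obtain ⟨p, hp, hlp⟩ := hl
    rw [hSecF, Set.Finite.mem_toFinset, hSecDef] at hp
    rw [Set.Finite.mem_toFinset, hTan] at hlp
    exact ⟨p, hp.1.2, hp.1.1, by simpa using hp.2, hlp⟩
  have hlne : ∀ l ∈ Tangents, l ≠ ℓ' := by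
    intro l hl h
    obtain ⟨p, _, _, hpT, hlp⟩ := htl l hl
    rw [h, htang] at hlp
    exact hpT (Set.singleton_eq_singleton_iff.1 hlp.symm)
  set pt : PG F → PG F := fun l => if h : l ≠ ℓ' then HasPoints.mkPoint (P := PG F) h else T
    with hpt
  have hptl : ∀ l ∈ Tangents, pt l ∈ l ∧ pt l ∈ ℓ' ∧ pt l ≠ T := by
    intro l hl
    have hne := hlne l hl
    have hax := HasPoints.mkPoint_ax (P := PG F) hne
    have hpteq : pt l = HasPoints.mkPoint (P := PG F) hne := by rw [hpt]; simp [hne]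
    refine ⟨hpteq ▸ hax.1, hpteq ▸ hax.2, ?_⟩
    intro hPT
    obtain ⟨p, _, _, hpT, hlp⟩ := htl l hl
    have hTl : T ∈ l := hPT ▸ (hpteq ▸ hax.1)
    have : T ∈ ({x : PG F | x ∈ l} ∩ S) := ⟨hTl, hTS⟩
    rw [hlp] at this
    exact hpT (Set.mem_singleton_iff.1 this).symm
  have hmain : Tangents.card + EF.card ≤ (EF.sigma (fun P => LF P)).card := by
    rw [← Finset.card_disjSum]
    apply Finset.card_le_card_of_injOn
      (fun x => Sum.elim (fun l => (⟨pt l, l⟩ : Σ _ : PG F, PG F)) (fun R => ⟨R, ℓ'⟩) x)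
    · rintro (l | R) hx
      · have hl : l ∈ Tangents := by rwa [Finset.mem_coe, Finset.inl_mem_disjSum] at hx
        obtain ⟨hptl1, hptl2, hptl3⟩ := hptl l hl
        obtain ⟨p, hp1, hp2, _, hp4⟩ := htl l hl
        simp only [Sum.elim_inl, Finset.mem_coe, Finset.mem_sigma]
        constructor
        · rw [hEF, Set.Finite.mem_toFinset, hE]
          exact ⟨hptl2, by simpa using hptl3⟩
        · rw [hLF, Set.Finite.mem_toFinset, hLset]
          exact ⟨hptl1, Or.inl ⟨p, hp1, hp2, fun h => hQS (h ▸ hp1), hp4⟩⟩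
      · have hR : R ∈ EF := by rwa [Finset.mem_coe, Finset.inr_mem_disjSum] at hx
        have hR' : R ∈ E := by rw [hEF, Set.Finite.mem_toFinset] at hR; exact hR
        simp only [Sum.elim_inr, Finset.mem_coe, Finset.mem_sigma]
        refine ⟨hR, ?_⟩
        rw [hLF, Set.Finite.mem_toFinset, hLset]
        exact ⟨hR'.1, Or.inl ⟨T, hTS, hT, hTQ, htang⟩⟩
    · intro x hx y hy hxy
      rw [Finset.mem_coe] at hx hy
      rcases x with l | R <;> rcases y with l' | R'
      · simp only [Sum.elim_inl, Sigma.ext_iff, heq_eq_eq] at hxy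
        rw [hxy.2]
      · exfalso
        simp only [Sum.elim_inl, Sum.elim_inr, Sigma.ext_iff, heq_eq_eq] at hxy
        have hl : l ∈ Tangents := by rwa [Finset.inl_mem_disjSum] at hx
        exact hlne l hl hxy.2
      · exfalso
        simp only [Sum.elim_inl, Sum.elim_inr, Sigma.ext_iff, heq_eq_eq] at hxy
        have hl : l' ∈ Tangents := by rwa [Finset.inl_mem_disjSum] at hy
        exact hlne l' hl hxy.2.symm
      · simp only [Sum.elim_inr, Sigma.ext_iff, heq_eq_eq] at hxy
        rw [hxy.1]
  have hupper : (EF.sigma (fun P => LF P)).card ≤ q * t := by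
    rw [Finset.card_sigma]
    calc ∑ P ∈ EF, (LF P).card ≤ ∑ _P ∈ EF, t := Finset.sum_le_sum hLFle
      _ = EF.card * t := by rw [Finset.sum_const, smul_eq_mul]
      _ = q * t := by rw [hEFcard]
  have hsum : (k - 1) * t + q ≤ q * t := by
    have h := hmain.trans hupper
    rwa [hTangentsCard, hEFcard] at h
  have ht0 : (0 : ℚ) < t := by exact_mod_cast ht1
  have hc : ((k : ℚ) - 1) * t + q ≤ q * t := by
    have h := (Nat.cast_le (α := ℚ)).2 hsum
    have hk1 : (1 : ℕ) ≤ k := by omega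
    push_cast [Nat.cast_sub hk1] at h
    linarith
  have h1 : (q : ℚ) - q / t < (k : ℚ) - 1 := by linarith
  have h2 : ((q : ℚ) - q / t) * t < ((k : ℚ) - 1) * t := mul_lt_mul_of_pos_right h1 ht0
  have h3 : ((q : ℚ) - q / t) * t = q * t - q := by field_simp
  linarith
end
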